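/- Suppose s ≥ 3 and r > ρ(s), i.e. r ≥ s+1 and L(r,s) > 0. For every τ ≥ 1, the function η_τ(β,γ,δ) = φ(α_τ, β, γ, δ) attains a unique global maximum over K_τ = {(β,γ,δ) ∈ ℝ³ : 0 ≤ γ ≤ β, 0 ≤ δ ≤ α_τ−β, β+γ ≤ 1−α_τ}, achieved at the point (β_τ, γ_τ, δ_τ). In particular, for every τ > 1 the partial derivatives ∂φ/∂β, ∂φ/∂γ and ∂φ/∂δ all vanish at x_τ = (α_τ, β_τ, γ_τ, δ_τ). -/

import Mathlib

/-!
For fixed `α`, `φ` is, up to terms not depending on `(β, γ, δ)`, the sum of `g (1 - α - β)`, of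
`-g` at six further affine forms and of a linear term. Expanding `g` to first order at a point
where `∂φ/∂β = ∂φ/∂γ = ∂φ/∂δ = 0`, the linear terms cancel and what remains is a signed sum of
relative entropies `a * klFun (y / a) ≥ 0`. The only one with a plus sign sits at
`1 - α - β = (1 - α - β - γ) + γ` and is dominated, by the log-sum inequality, by two of those
with a minus sign; so such a point is the strict maximum of `φ (α, ·)` on `K`, and the partial
derivatives vanish there by Fermat's theorem.

For `τ > 1`, `x_τ` is such a point: with `u = 1 - α_τ` the seven affine forms are `u` times
explicit expressions in `τ`, and the three stationarity equations reduce to the definitions of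
`p_τ`, `q_τ` and to `N_τ - p_τ - q_τ` being the positive root of
`κ₄ w² = (s - 3) q_τ w + (s - 2) q_τ (p_τ + q_τ)`.
-/

noncomputable section

/-- `g(x) = x·ln x` (note `g(0) = 0` automatically, since `Real.log 0 = 0`). -/
def xlog (x : ℝ) : ℝ := x * Real.log x

/-- `h(r,s) = (r−2)² + 2(s−2)(r−1)(r−2) + (1/2)(s−2)(s−3)(r−1)²`. -/
def hRS (r s : ℝ) : ℝ :=
  (r - 2) ^ 2 + 2 * (s - 2) * (r - 1) * (r - 2) + (1 / 2) * (s - 2) * (s - 3) * (r - 1) ^ 2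

/-- `κ₁ = (r−1)^{s−2}(r−2)²(s−1)(s−2)^{2(s−2)}` (real exponents, via `rpow`). -/
def kap1 (r s : ℝ) : ℝ := (r - 1) ^ (s - 2) * (r - 2) ^ 2 * (s - 1) * (s - 2) ^ (2 * (s - 2))

/-- `κ₂ = 2h(r,s)/(r−2)²`. -/
def kap2 (r s : ℝ) : ℝ := 2 * hRS r s / (r - 2) ^ 2

/-- `κ₃ = (rs−r−s)²/h(r,s)`. -/
def kap3 (r s : ℝ) : ℝ := (r * s - r - s) ^ 2 / hRS r s

/-- `κ₄ = (r−3)/(r−2)`. -/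
def kap4 (r : ℝ) : ℝ := (r - 3) / (r - 2)

/-- The function `φ` of four real variables `(α,β,γ,δ)` (with parameters `r,s`). -/
def phiRS (r s α β γ δ : ℝ) : ℝ :=
  xlog (1 - α - β) + 2 * (s - 1) * xlog α + ((s - 1) / s) * xlog (r * s - r - s - s * α)
    - xlog (β - γ) - xlog δ - 2 * xlog γ - 2 * xlog (α - β - δ)
    - xlog ((s - 3) * α + β + δ) - xlog (1 - α - β - γ)
    + α * Real.log (kap1 r s) + β * Real.log (kap2 r s) + γ * Real.log (kap3 r s)
    + δ * Real.log (kap4 r)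

/-- Membership in the domain `K = {(α,β,γ,δ) : 0 ≤ γ ≤ β, 0 ≤ δ ≤ α−β, α+β+γ ≤ 1}`. -/
def memK (α β γ δ : ℝ) : Prop :=
  0 ≤ γ ∧ γ ≤ β ∧ 0 ≤ δ ∧ δ ≤ α - β ∧ α + β + γ ≤ 1

/-- `L(r,s) = ln(r−1) + ln(s−1) + ((s−1)(rs−r−s)/s)·ln(1 − s/(rs−r))`;
the hypothesis `r > ρ(s)` means `r ≥ s+1` and `L(r,s) > 0`. -/
def Lfun (r s : ℝ) : ℝ :=
  Real.log (r - 1) + Real.log (s - 1) +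
    ((s - 1) * (r * s - r - s) / s) * Real.log (1 - s / (r * s - r))

end

noncomputable section

/-- `D_τ = (τ−1)² + 2κ₃τ − κ₃`. -/
def DT (r s τ : ℝ) : ℝ := (τ - 1) ^ 2 + 2 * kap3 r s * τ - kap3 r s

/-- `p_τ = ((τ−1)² + κ₃(τ−1))/D_τ`. -/
def pT (r s τ : ℝ) : ℝ := ((τ - 1) ^ 2 + kap3 r s * (τ - 1)) / DT r s τ

/-- `q_τ = κ₄·τ·(τ−1)²/(κ₂·D_τ)`. -/
def qT (r s τ : ℝ) : ℝ := kap4 r * τ * (τ - 1) ^ 2 / (kap2 r s * DT r s τ)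

/-- `N_τ = p_τ + q_τ + ((s−3)/(2κ₄))q_τ + √((s−2)/κ₄·q_τ(p_τ+q_τ) + (s−3)²/(4κ₄²)·q_τ²)`. -/
def NT (r s τ : ℝ) : ℝ :=
  pT r s τ + qT r s τ + ((s - 3) / (2 * kap4 r)) * qT r s τ +
    Real.sqrt (((s - 2) / kap4 r) * qT r s τ * (pT r s τ + qT r s τ) +
      ((s - 3) ^ 2 / (4 * (kap4 r) ^ 2)) * (qT r s τ) ^ 2)

/-- `α_τ = N_τ/(1+N_τ)`. -/
def alphaT (r s τ : ℝ) : ℝ := NT r s τ / (1 + NT r s τ)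

/-- `β_τ = p_τ(1−α_τ)`. -/
def betaT (r s τ : ℝ) : ℝ := pT r s τ * (1 - alphaT r s τ)

/-- `γ_τ = (κ₃(τ−1)/D_τ)(1−α_τ)`. -/
def gammaT (r s τ : ℝ) : ℝ := (kap3 r s * (τ - 1) / DT r s τ) * (1 - alphaT r s τ)

/-- `δ_τ = q_τ(1−α_τ)`. -/
def deltaT (r s τ : ℝ) : ℝ := qT r s τ * (1 - alphaT r s τ)

end

open InformationTheory

theorem xlog_eq_add_mul_klFun {a : ℝ} (ha : a ≠ 0) (y : ℝ) :
    xlog y = xlog a + (Real.log a + 1) * (y - a) + a * klFun (y / a) := by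
  rcases eq_or_ne y 0 with rfl | hy
  · simp only [xlog, klFun, zero_div, zero_mul, Real.log_zero]
    ring
  · rw [xlog, xlog, klFun, Real.log_div hy ha]
    field_simp
    ring

theorem mul_klFun_div_nonneg {a y : ℝ} (ha : 0 < a) (hy : 0 ≤ y) : 0 ≤ a * klFun (y / a) :=
  mul_nonneg ha.le (klFun_nonneg (div_nonneg hy ha.le))

theorem mul_klFun_div_eq_zero_iff {a y : ℝ} (ha : 0 < a) (hy : 0 ≤ y) :
    a * klFun (y / a) = 0 ↔ y = a := by
  rw [mul_eq_zero, klFun_eq_zero_iff (div_nonneg hy ha.le), div_eq_one_iff_eq ha.ne']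
  simp [ha.ne']

/-- The log-sum inequality. -/
theorem add_mul_klFun_div_add_le {a b x y : ℝ} (ha : 0 < a) (hb : 0 < b) (hx : 0 ≤ x)
    (hy : 0 ≤ y) :
    (a + b) * klFun ((x + y) / (a + b)) ≤ a * klFun (x / a) + b * klFun (y / b) := by
  have hab : 0 < a + b := add_pos ha hb
  have hconv : klFun (a / (a + b) * (x / a) + b / (a + b) * (y / b))
      ≤ a / (a + b) * klFun (x / a) + b / (a + b) * klFun (y / b) :=
    convexOn_klFun.2 (Set.mem_Ici.2 (div_nonneg hx ha.le)) (Set.mem_Ici.2 (div_nonneg hy hb.le))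
      (div_nonneg ha.le hab.le) (div_nonneg hb.le hab.le) (by rw [← add_div, div_self hab.ne'])
  have hmix : a / (a + b) * (x / a) + b / (a + b) * (y / b) = (x + y) / (a + b) := by
    field_simp
  rw [hmix] at hconv
  calc (a + b) * klFun ((x + y) / (a + b))
      ≤ (a + b) * (a / (a + b) * klFun (x / a) + b / (a + b) * klFun (y / b)) :=
        mul_le_mul_of_nonneg_left hconv hab.le
    _ = a * klFun (x / a) + b * klFun (y / b) := by field_simp

theorem memK_iff {α β γ δ : ℝ} :
    memK α β γ δ ↔ 0 ≤ γ ∧ γ ≤ β ∧ 0 ≤ δ ∧ δ ≤ α - β ∧ β + γ ≤ 1 - α := by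
  simp only [memK, ← sub_nonneg (b := α + β + γ), ← sub_nonneg (b := β + γ)]
  ring_nf

/-- An interior point of `K` at which `∂φ/∂β`, `∂φ/∂γ` and `∂φ/∂δ` vanish, with the three
equations exponentiated. -/
structure IsCriticalPoint (r s α β γ δ : ℝ) : Prop where
  gamma_pos : 0 < γ
  gamma_lt : γ < β
  delta_pos : 0 < δ
  delta_lt : δ < α - β
  add_lt : α + β + γ < 1
  balance_beta : (α - β - δ) ^ 2 * (1 - α - β - γ) * kap2 r s
    = (1 - α - β) * (β - γ) * ((s - 3) * α + β + δ)
  balance_gamma : (β - γ) * (1 - α - β - γ) * kap3 r s = γ ^ 2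
  balance_delta : (α - β - δ) ^ 2 * kap4 r = δ * ((s - 3) * α + β + δ)

namespace IsCriticalPoint

variable {r s α β γ δ : ℝ}

theorem one_sub_sub_pos (h : IsCriticalPoint r s α β γ δ) : 0 < 1 - α - β := by
  linarith [h.gamma_pos, h.add_lt]

theorem sub_three_mul_add_add_pos (h : IsCriticalPoint r s α β γ δ) (hs : 3 ≤ s) :
    0 < (s - 3) * α + β + δ := by
  have : 0 ≤ (s - 3) * α := mul_nonneg (by linarith) (by linarith [h.gamma_pos, h.gamma_lt,
    h.delta_pos, h.delta_lt])
  linarith [h.gamma_pos, h.gamma_lt, h.delta_pos]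

theorem log_balance_beta (h : IsCriticalPoint r s α β γ δ) (hs : 3 ≤ s) :
    2 * Real.log (α - β - δ) + Real.log (1 - α - β - γ) + Real.log (kap2 r s)
      = Real.log (1 - α - β) + Real.log (β - γ) + Real.log ((s - 3) * α + β + δ) := by
  have hE : α - β - δ ≠ 0 := (sub_pos.2 h.delta_lt).ne'
  have hG : 1 - α - β - γ ≠ 0 := by linarith [h.add_lt]
  have hrhs : (1 - α - β) * (β - γ) * ((s - 3) * α + β + δ) ≠ 0 :=
    mul_ne_zero (mul_ne_zero h.one_sub_sub_pos.ne' (sub_pos.2 h.gamma_lt).ne')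
      (h.sub_three_mul_add_add_pos hs).ne'
  have hk : kap2 r s ≠ 0 := right_ne_zero_of_mul (h.balance_beta ▸ hrhs)
  have := congrArg Real.log h.balance_beta
  rw [Real.log_mul (by positivity) hk, Real.log_mul (by positivity) hG, Real.log_pow,
    Real.log_mul (left_ne_zero_of_mul hrhs) (h.sub_three_mul_add_add_pos hs).ne',
    Real.log_mul h.one_sub_sub_pos.ne' (sub_pos.2 h.gamma_lt).ne'] at this
  push_cast at this
  exact this

theorem log_balance_gamma (h : IsCriticalPoint r s α β γ δ) :
    Real.log (β - γ) + Real.log (1 - α - β - γ) + Real.log (kap3 r s) = 2 * Real.log γ := by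
  have hB : β - γ ≠ 0 := (sub_pos.2 h.gamma_lt).ne'
  have hG : 1 - α - β - γ ≠ 0 := by linarith [h.add_lt]
  have hk : kap3 r s ≠ 0 :=
    right_ne_zero_of_mul (h.balance_gamma ▸ pow_ne_zero 2 h.gamma_pos.ne')
  have := congrArg Real.log h.balance_gamma
  rw [Real.log_mul (mul_ne_zero hB hG) hk, Real.log_mul hB hG, Real.log_pow] at this
  push_cast at this
  exact this

theorem log_balance_delta (h : IsCriticalPoint r s α β γ δ) (hs : 3 ≤ s) :
    2 * Real.log (α - β - δ) + Real.log (kap4 r)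
      = Real.log δ + Real.log ((s - 3) * α + β + δ) := by
  have hE : α - β - δ ≠ 0 := (sub_pos.2 h.delta_lt).ne'
  have hrhs : δ * ((s - 3) * α + β + δ) ≠ 0 :=
    mul_ne_zero h.delta_pos.ne' (h.sub_three_mul_add_add_pos hs).ne'
  have hk : kap4 r ≠ 0 := right_ne_zero_of_mul (h.balance_delta ▸ hrhs)
  have := congrArg Real.log h.balance_delta
  rw [Real.log_mul (by positivity) hk, Real.log_pow,
    Real.log_mul h.delta_pos.ne' (h.sub_three_mul_add_add_pos hs).ne'] at this
  push_cast at this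
  exact this

theorem phiRS_sub_phiRS (h : IsCriticalPoint r s α β γ δ) (hs : 3 ≤ s) (β' γ' δ' : ℝ) :
    phiRS r s α β' γ' δ' - phiRS r s α β γ δ
      = (1 - α - β) * klFun ((1 - α - β') / (1 - α - β))
        - (β - γ) * klFun ((β' - γ') / (β - γ)) - δ * klFun (δ' / δ)
        - 2 * (γ * klFun (γ' / γ)) - 2 * ((α - β - δ) * klFun ((α - β' - δ') / (α - β - δ)))
        - ((s - 3) * α + β + δ) * klFun (((s - 3) * α + β' + δ') / ((s - 3) * α + β + δ))
        - (1 - α - β - γ) * klFun ((1 - α - β' - γ') / (1 - α - β - γ)) := by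
  have hG : 1 - α - β - γ ≠ 0 := by linarith [h.add_lt]
  simp only [phiRS]
  rw [xlog_eq_add_mul_klFun h.one_sub_sub_pos.ne' (1 - α - β'),
    xlog_eq_add_mul_klFun (sub_pos.2 h.gamma_lt).ne' (β' - γ'),
    xlog_eq_add_mul_klFun h.gamma_pos.ne' γ', xlog_eq_add_mul_klFun h.delta_pos.ne' δ',
    xlog_eq_add_mul_klFun (sub_pos.2 h.delta_lt).ne' (α - β' - δ'),
    xlog_eq_add_mul_klFun (h.sub_three_mul_add_add_pos hs).ne' ((s - 3) * α + β' + δ'),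
    xlog_eq_add_mul_klFun hG (1 - α - β' - γ')]
  linear_combination (β' - β) * h.log_balance_beta hs + (γ' - γ) * h.log_balance_gamma
    + (δ' - δ) * h.log_balance_delta hs

theorem phiRS_lt (h : IsCriticalPoint r s α β γ δ) (hs : 3 ≤ s) {β' γ' δ' : ℝ}
    (hK : memK α β' γ' δ') (hne : ¬(β' = β ∧ γ' = γ ∧ δ' = δ)) :
    phiRS r s α β' γ' δ' < phiRS r s α β γ δ := by
  obtain ⟨hγ', hγβ', hδ', hδα', hαβγ'⟩ := hK
  have hB : 0 < β - γ := sub_pos.2 h.gamma_lt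
  have hG : 0 < 1 - α - β - γ := by linarith [h.add_lt]
  have hF' : 0 ≤ (s - 3) * α + β' + δ' := by
    have : 0 ≤ (s - 3) * α := mul_nonneg (by linarith) (by linarith)
    linarith
  have logsum : (1 - α - β) * klFun ((1 - α - β') / (1 - α - β))
      ≤ (1 - α - β - γ) * klFun ((1 - α - β' - γ') / (1 - α - β - γ)) + γ * klFun (γ' / γ) := by
    have := add_mul_klFun_div_add_le hG h.gamma_pos (x := 1 - α - β' - γ') (by linarith) hγ'
    rwa [sub_add_cancel, sub_add_cancel] at this
  have hE := mul_klFun_div_nonneg (sub_pos.2 h.delta_lt) (y := α - β' - δ') (by linarith)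
  have hF := mul_klFun_div_nonneg (h.sub_three_mul_add_add_pos hs) hF'
  have hB' := mul_klFun_div_nonneg hB (y := β' - γ') (by linarith)
  have hC' := mul_klFun_div_nonneg h.gamma_pos hγ'
  have hD' := mul_klFun_div_nonneg h.delta_pos hδ'
  have hmoved : 0 < (β - γ) * klFun ((β' - γ') / (β - γ)) + γ * klFun (γ' / γ)
      + δ * klFun (δ' / δ) := by
    by_contra! hzero
    have eB := (mul_klFun_div_eq_zero_iff hB (y := β' - γ') (by linarith)).1 (by linarith)
    have eC := (mul_klFun_div_eq_zero_iff h.gamma_pos hγ').1 (by linarith)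
    have eD := (mul_klFun_div_eq_zero_iff h.delta_pos hδ').1 (by linarith)
    exact hne ⟨by linarith, eC, eD⟩
  linarith [h.phiRS_sub_phiRS hs β' γ' δ']

theorem phiRS_le (h : IsCriticalPoint r s α β γ δ) (hs : 3 ≤ s) {β' γ' δ' : ℝ}
    (hK : memK α β' γ' δ') : phiRS r s α β' γ' δ' ≤ phiRS r s α β γ δ := by
  by_cases heq : β' = β ∧ γ' = γ ∧ δ' = δ
  · obtain ⟨rfl, rfl, rfl⟩ := heq
    exact le_rfl
  · exact (h.phiRS_lt hs hK heq).le

theorem isLocalMax_beta (h : IsCriticalPoint r s α β γ δ) (hs : 3 ≤ s) :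
    IsLocalMax (fun b => phiRS r s α b γ δ) β := by
  filter_upwards [eventually_gt_nhds h.gamma_lt,
    eventually_lt_nhds (show β < α - δ by linarith [h.delta_lt]),
    eventually_lt_nhds (show β < 1 - α - γ by linarith [h.add_lt])] with b hγb hbδ hbγ
  exact h.phiRS_le hs ⟨h.gamma_pos.le, hγb.le, h.delta_pos.le, by linarith, by linarith⟩

theorem isLocalMax_gamma (h : IsCriticalPoint r s α β γ δ) (hs : 3 ≤ s) :
    IsLocalMax (fun c => phiRS r s α β c δ) γ := by
  filter_upwards [eventually_gt_nhds h.gamma_pos, eventually_lt_nhds h.gamma_lt,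
    eventually_lt_nhds (show γ < 1 - α - β by linarith [h.add_lt])] with c hc hcβ hcα
  exact h.phiRS_le hs ⟨hc.le, hcβ.le, h.delta_pos.le, h.delta_lt.le, by linarith⟩

theorem isLocalMax_delta (h : IsCriticalPoint r s α β γ δ) (hs : 3 ≤ s) :
    IsLocalMax (fun d => phiRS r s α β γ d) δ := by
  filter_upwards [eventually_gt_nhds h.delta_pos, eventually_lt_nhds h.delta_lt] with d hd hdα
  exact h.phiRS_le hs ⟨h.gamma_pos.le, h.gamma_lt.le, hd.le, hdα.le, h.add_lt.le⟩

theorem memK (h : IsCriticalPoint r s α β γ δ) : memK α β γ δ :=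
  ⟨h.gamma_pos.le, h.gamma_lt.le, h.delta_pos.le, h.delta_lt.le, h.add_lt.le⟩

end IsCriticalPoint

section Kappa

variable {r s : ℝ}

theorem hRS_pos (hs : 3 ≤ s) (hr : 3 < r) : 0 < hRS r s := by
  have h₁ : 0 ≤ 2 * (s - 2) * (r - 1) * (r - 2) :=
    mul_nonneg (mul_nonneg (by linarith) (by linarith)) (by linarith)
  have h₂ : 0 ≤ 1 / 2 * (s - 2) * (s - 3) * (r - 1) ^ 2 :=
    mul_nonneg (mul_nonneg (by linarith) (by linarith)) (sq_nonneg _)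
  have h₃ : 0 < (r - 2) ^ 2 := pow_pos (by linarith) 2
  rw [hRS]
  linarith

theorem kap2_pos (hs : 3 ≤ s) (hr : 3 < r) : 0 < kap2 r s :=
  div_pos (mul_pos two_pos (hRS_pos hs hr)) (pow_pos (by linarith) 2)

theorem kap3_pos (hs : 3 ≤ s) (hr : 3 < r) : 0 < kap3 r s := by
  have : 0 < r * s - r - s := by nlinarith
  exact div_pos (pow_pos this 2) (hRS_pos hs hr)

theorem kap4_pos (hr : 3 < r) : 0 < kap4 r :=
  div_pos (by linarith) (by linarith)

end Kappa

theorem mul_sq_eq_of_eq_add_sqrt {k a b w : ℝ} (hk : k ≠ 0)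
    (hX : 0 ≤ b / k + (a / (2 * k)) ^ 2) (hw : w = a / (2 * k) + √(b / k + (a / (2 * k)) ^ 2)) :
    k * w ^ 2 = a * w + b := by
  have hsq := Real.sq_sqrt hX
  rw [← sub_eq_iff_eq_add'] at hw
  rw [← hw] at hsq
  field_simp at hsq
  exact mul_left_cancel₀ hk (by linear_combination hsq / 4)

section CriticalPoint

variable {r s τ : ℝ}

theorem DT_pos (hk3 : 0 < kap3 r s) (hτ : 1 ≤ τ) : 0 < DT r s τ := by
  have : 0 ≤ kap3 r s * (τ - 1) := mul_nonneg hk3.le (by linarith)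
  rw [DT]
  nlinarith [sq_nonneg (τ - 1)]

theorem pT_pos (hk3 : 0 < kap3 r s) (hτ : 1 < τ) : 0 < pT r s τ := by
  have : 0 < kap3 r s * (τ - 1) := mul_pos hk3 (by linarith)
  exact div_pos (by positivity) (DT_pos hk3 hτ.le)

theorem qT_pos (hk2 : 0 < kap2 r s) (hk3 : 0 < kap3 r s) (hk4 : 0 < kap4 r) (hτ : 1 < τ) :
    0 < qT r s τ :=
  div_pos (mul_pos (mul_pos hk4 (by linarith)) (pow_pos (by linarith) 2))
    (mul_pos hk2 (DT_pos hk3 hτ.le))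

theorem NT_sub_pT_add_qT :
    NT r s τ - (pT r s τ + qT r s τ) = (s - 3) * qT r s τ / (2 * kap4 r)
      + √((s - 2) * qT r s τ * (pT r s τ + qT r s τ) / kap4 r
        + ((s - 3) * qT r s τ / (2 * kap4 r)) ^ 2) := by
  have hradicand : (s - 2) * qT r s τ * (pT r s τ + qT r s τ) / kap4 r
      + ((s - 3) * qT r s τ / (2 * kap4 r)) ^ 2
      = (s - 2) / kap4 r * qT r s τ * (pT r s τ + qT r s τ)
        + (s - 3) ^ 2 / (4 * kap4 r ^ 2) * qT r s τ ^ 2 := by ring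
  rw [hradicand, NT]
  ring

theorem pT_add_qT_lt_NT (hs : 3 ≤ s) (hk4 : 0 < kap4 r) (hp : 0 < pT r s τ)
    (hq : 0 < qT r s τ) : pT r s τ + qT r s τ < NT r s τ := by
  have hroot : 0 < √((s - 2) * qT r s τ * (pT r s τ + qT r s τ) / kap4 r
      + ((s - 3) * qT r s τ / (2 * kap4 r)) ^ 2) :=
    Real.sqrt_pos.2 (add_pos_of_pos_of_nonneg
      (div_pos (mul_pos (mul_pos (by linarith) hq) (by linarith)) hk4) (sq_nonneg _))
  have hlin : 0 ≤ (s - 3) * qT r s τ / (2 * kap4 r) :=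
    div_nonneg (mul_nonneg (by linarith) hq.le) (by linarith)
  linarith [NT_sub_pT_add_qT (r := r) (s := s) (τ := τ)]

theorem kap4_mul_sq_NT_sub (hs : 2 ≤ s) (hk4 : 0 < kap4 r) (hp : 0 ≤ pT r s τ)
    (hq : 0 ≤ qT r s τ) :
    kap4 r * (NT r s τ - (pT r s τ + qT r s τ)) ^ 2
      = qT r s τ * ((s - 3) * NT r s τ + (pT r s τ + qT r s τ)) := by
  have hX : 0 ≤ (s - 2) * qT r s τ * (pT r s τ + qT r s τ) / kap4 r
      + ((s - 3) * qT r s τ / (2 * kap4 r)) ^ 2 :=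
    add_nonneg (div_nonneg (mul_nonneg (mul_nonneg (by linarith) hq) (by linarith)) hk4.le)
      (sq_nonneg _)
  linear_combination mul_sq_eq_of_eq_add_sqrt hk4.ne' hX NT_sub_pT_add_qT

theorem alphaT_eq_NT_mul (hN : 1 + NT r s τ ≠ 0) :
    alphaT r s τ = NT r s τ * (1 - alphaT r s τ) := by
  rw [alphaT]
  field_simp
  ring

theorem one_sub_alphaT_sub_betaT (hD : DT r s τ ≠ 0) :
    1 - alphaT r s τ - betaT r s τ = (1 - alphaT r s τ) * (kap3 r s * τ / DT r s τ) := by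
  rw [betaT, pT]
  field_simp
  rw [DT]
  ring

theorem betaT_sub_gammaT :
    betaT r s τ - gammaT r s τ = (1 - alphaT r s τ) * ((τ - 1) ^ 2 / DT r s τ) := by
  rw [betaT, gammaT, pT]
  ring

theorem alphaT_sub_betaT_sub_deltaT (hN : 1 + NT r s τ ≠ 0) :
    alphaT r s τ - betaT r s τ - deltaT r s τ
      = (1 - alphaT r s τ) * (NT r s τ - (pT r s τ + qT r s τ)) := by
  rw [betaT, deltaT]
  linear_combination alphaT_eq_NT_mul hN

theorem sub_three_mul_alphaT_add_betaT_add_deltaT (hN : 1 + NT r s τ ≠ 0) :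
    (s - 3) * alphaT r s τ + betaT r s τ + deltaT r s τ
      = (1 - alphaT r s τ) * ((s - 3) * NT r s τ + (pT r s τ + qT r s τ)) := by
  rw [betaT, deltaT]
  linear_combination (s - 3) * alphaT_eq_NT_mul hN

theorem one_sub_alphaT_sub_betaT_sub_gammaT (hD : DT r s τ ≠ 0) :
    1 - alphaT r s τ - betaT r s τ - gammaT r s τ = (1 - alphaT r s τ) * (kap3 r s / DT r s τ) := by
  rw [one_sub_alphaT_sub_betaT hD, gammaT]
  field_simp
  ring

theorem isCriticalPoint_xT (hs : 3 ≤ s) (hr : 3 < r) (hτ : 1 < τ) :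
    IsCriticalPoint r s (alphaT r s τ) (betaT r s τ) (gammaT r s τ) (deltaT r s τ) := by
  have hk2 := kap2_pos hs hr
  have hk3 := kap3_pos hs hr
  have hk4 := kap4_pos hr
  have hD := DT_pos hk3 hτ.le
  have hp := pT_pos hk3 hτ
  have hq := qT_pos hk2 hk3 hk4 hτ
  have hN := pT_add_qT_lt_NT hs hk4 hp hq
  have hquad := kap4_mul_sq_NT_sub (by linarith) hk4 hp.le hq.le
  have h1N : 0 < 1 + NT r s τ := by linarith
  have hu : 0 < 1 - alphaT r s τ := by
    rw [alphaT, one_sub_div h1N.ne', add_sub_cancel_right]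
    exact div_pos one_pos h1N
  have hqD : qT r s τ * (kap2 r s * DT r s τ) = kap4 r * τ * (τ - 1) ^ 2 :=
    div_mul_cancel₀ _ (mul_pos hk2 hD).ne'
  have eA := one_sub_alphaT_sub_betaT hD.ne'
  have eB := betaT_sub_gammaT (r := r) (s := s) (τ := τ)
  have eE := alphaT_sub_betaT_sub_deltaT h1N.ne'
  have eF := sub_three_mul_alphaT_add_betaT_add_deltaT (s := s) h1N.ne'
  have eG := one_sub_alphaT_sub_betaT_sub_gammaT hD.ne'
  refine ⟨?_, ?_, ?_, ?_, ?_, ?_, ?_, ?_⟩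
  · exact mul_pos (div_pos (mul_pos hk3 (by linarith)) hD) hu
  · exact sub_pos.1 (eB ▸ mul_pos hu (div_pos (pow_pos (by linarith) 2) hD))
  · exact mul_pos hq hu
  · linarith [mul_pos hu (sub_pos.2 hN)]
  · linarith [mul_pos hu (div_pos hk3 hD)]
  · rw [eE, eG, eA, eB, eF]
    field_simp
    refine mul_left_cancel₀ hk4.ne' ?_
    linear_combination DT r s τ * kap2 r s * hquad
      + ((s - 3) * NT r s τ + (pT r s τ + qT r s τ)) * hqD
  · rw [eB, eG, gammaT]
    ring
  · rw [eE, eF, deltaT]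
    linear_combination (1 - alphaT r s τ) ^ 2 * hquad

end CriticalPoint

theorem xT_one {r s : ℝ} :
    alphaT r s 1 = 0 ∧ betaT r s 1 = 0 ∧ gammaT r s 1 = 0 ∧ deltaT r s 1 = 0 := by
  simp [alphaT, betaT, gammaT, deltaT, NT, pT, qT]

theorem stmt_14 (r s : ℤ) (hs : 3 ≤ s) (hr : s + 1 ≤ r)
    (τ : ℝ) (hτ : 1 ≤ τ) :
    (0 ≤ gammaT r s τ ∧ gammaT r s τ ≤ betaT r s τ ∧ 0 ≤ deltaT r s τ ∧
      deltaT r s τ ≤ alphaT r s τ - betaT r s τ ∧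
      betaT r s τ + gammaT r s τ ≤ 1 - alphaT r s τ) ∧
    (∀ β γ δ : ℝ,
      (0 ≤ γ ∧ γ ≤ β ∧ 0 ≤ δ ∧ δ ≤ alphaT r s τ - β ∧ β + γ ≤ 1 - alphaT r s τ) →
      ¬(β = betaT r s τ ∧ γ = gammaT r s τ ∧ δ = deltaT r s τ) →
      phiRS r s (alphaT r s τ) β γ δ <
        phiRS r s (alphaT r s τ) (betaT r s τ) (gammaT r s τ) (deltaT r s τ)) ∧
    (1 < τ →
      deriv (fun b => phiRS r s (alphaT r s τ) b (gammaT r s τ) (deltaT r s τ))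
          (betaT r s τ) = 0 ∧
      deriv (fun c => phiRS r s (alphaT r s τ) (betaT r s τ) c (deltaT r s τ))
          (gammaT r s τ) = 0 ∧
      deriv (fun d => phiRS r s (alphaT r s τ) (betaT r s τ) (gammaT r s τ) d)
          (deltaT r s τ) = 0) := by
  have hs' : (3 : ℝ) ≤ s := by exact_mod_cast hs
  have hr' : (3 : ℝ) < r := by
    have : (s : ℝ) + 1 ≤ r := by exact_mod_cast hr
    linarith
  rcases hτ.eq_or_lt with rfl | hτ
  · -- `K_1` is the single point `0 = x_1`.
    obtain ⟨hα, hβ, hγ, hδ⟩ := xT_one (r := (r : ℝ)) (s := (s : ℝ))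
    rw [hα, hβ, hγ, hδ]
    refine ⟨by norm_num, fun β γ δ ⟨h0γ, hγβ, h0δ, hδβ, _⟩ hne => ?_, fun h => (lt_irrefl 1 h).elim⟩
    exact absurd ⟨by linarith, by linarith, by linarith⟩ hne
  · have h := isCriticalPoint_xT hs' hr' hτ
    exact ⟨memK_iff.1 h.memK, fun β γ δ hK hne => h.phiRS_lt hs' (memK_iff.2 hK) hne,
      fun _ => ⟨(h.isLocalMax_beta hs').deriv_eq_zero, (h.isLocalMax_gamma hs').deriv_eq_zero,
        (h.isLocalMax_delta hs').deriv_eq_zero⟩⟩
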